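/- arXiv:1910.12117 — 8 statements merged into one kernel-verified Lean document; each statement's English description precedes it below -/
import Mathlib

section
/- Let G be a topological group, let C ⊆ G be an open subset with 1 ∈ closure(C), and let E ⊆ G be an open subset with E · C ⊆ E. Then E is regularly open: E = interior(closure(E)). -/
open scoped Pointwise

theorem interior_closure_subset_of_mul_subset {G : Type*} [Group G] [TopologicalSpace G]
    [IsTopologicalGroup G] {C E : Set G} (hCopen : IsOpen C) (hC1 : (1 : G) ∈ closure C)
    (hEC : E * C ⊆ E) : interior (closure E) ⊆ E :=
  calc interior (closure E) ⊆ interior (closure E) * closure C := Set.subset_mul_left _ hC1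
    _ = interior (closure E) * C := isOpen_interior.mul_closure C
    _ ⊆ closure E * C := Set.mul_subset_mul_right interior_subset
    _ = E * C := hCopen.closure_mul E
    _ ⊆ E := hEC

/-- Let `G` be a topological group, `C ⊆ G` an open set with `1 ∈ closure C`, and
`E ⊆ G` an open set with `E · C ⊆ E`. Then `E` is regularly open:
`E = interior (closure E)`. -/
theorem regularlyOpen_of_coneProperty
    {G : Type*} [Group G] [TopologicalSpace G] [IsTopologicalGroup G]
    (C E : Set G) (hCopen : IsOpen C) (hC1 : (1 : G) ∈ closure C)
    (hEopen : IsOpen E) (hEC : ∀ x ∈ E, ∀ c ∈ C, x * c ∈ E) :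
    E = interior (closure E) :=
  subset_antisymm (hEopen.subset_interior_iff.2 subset_closure)
    (interior_closure_subset_of_mul_subset hCopen hC1 (Set.mul_subset_iff.2 hEC))
end

section
/- Let G be a topological group, let C ⊆ G satisfy C ⊆ closure(interior(C)) (C is almost regular), and let E ⊆ G satisfy E · C ⊆ E. Let Ẽ ⊆ G be an open set such that E ∩ Ẽ is dense in Ẽ and interior(E) ⊆ Ẽ. Then Ẽ · closure(C) ⊆ Ẽ. -/
/-!
In a topological group, multiplying by an open set absorbs closures on either side:
`U * closure t = U * t` and `closure s * U = s * U`. Hence, for almost regular `C`,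
`Ẽ * closure C = Ẽ * interior C ⊆ (E ∩ Ẽ) * interior C`, an open subset of `E * C ⊆ E`,
so it lies in `interior E ⊆ Ẽ`.
-/

open Set Pointwise

section

variable {G : Type*} [Group G] [TopologicalSpace G] [IsTopologicalGroup G]

theorem IsOpen.mul_closure_eq_mul_interior {s t : Set G} (hs : IsOpen s)
    (ht : t ⊆ closure (interior t)) : s * closure t = s * interior t := by
  refine Subset.antisymm ?_ (mul_subset_mul_left (interior_subset.trans subset_closure))
  calc s * closure t ⊆ s * closure (interior t) := by
        simpa only [closure_closure] using mul_subset_mul_left (closure_mono ht)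
    _ = s * interior t := hs.mul_closure _

theorem mul_interior_subset_interior_of_mul_subset {s t : Set G} (h : s * t ⊆ s) :
    s * interior t ⊆ interior s :=
  subset_interior_mul_right.trans (interior_mono h)

end

/-- Let `G` be a topological group, `C ⊆ G` almost regular (`C ⊆ closure (interior C)`)
and `E ⊆ G` with `E · C ⊆ E`. If `Ẽ` is an open set such that `E ∩ Ẽ` is dense in `Ẽ`
and `interior E ⊆ Ẽ`, then `Ẽ · closure C ⊆ Ẽ`. -/
theorem representative_closure_cone_property
    {G : Type*} [Group G] [TopologicalSpace G] [IsTopologicalGroup G]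
    (C E Etil : Set G)
    (hC : C ⊆ closure (interior C))
    (hEC : ∀ x ∈ E, ∀ c ∈ C, x * c ∈ E)
    (hopen : IsOpen Etil)
    (hdense : Etil ⊆ closure (E ∩ Etil))
    (hint : interior E ⊆ Etil) :
    ∀ x ∈ Etil, ∀ c ∈ closure C, x * c ∈ Etil := by
  refine mul_subset_iff.1 ?_
  calc Etil * closure C = Etil * interior C := hopen.mul_closure_eq_mul_interior hC
    _ ⊆ closure (E ∩ Etil) * interior C := mul_subset_mul_right hdense
    _ = (E ∩ Etil) * interior C := isOpen_interior.closure_mul _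
    _ ⊆ E * interior C := mul_subset_mul_right inter_subset_left
    _ ⊆ interior E := mul_interior_subset_interior_of_mul_subset (mul_subset_iff.2 hEC)
    _ ⊆ Etil := hint
end

section
/- Let G be a group carrying a metric dist and a Borel measure μ such that both are right-invariant: dist(x·g, y·g) = dist(x, y) and μ(A·g) = μ(A) for all x, y, g ∈ G and all Borel sets A. Assume 0 < μ(ball(x, r)) < ∞ for every x ∈ G and r > 0. Let E ⊆ G be a Borel set and g ∈ G with μ((E·g) \ E) = 0. If x ∈ G is a point of density 1 for E, i.e. μ(ball(x, r) ∩ E)/μ(ball(x, r)) → 1 as r → 0⁺, then x·g is also a point of density 1 for E. In other words, the density-one set D of E satisfies D·g ⊆ D. -/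
open MeasureTheory Metric Filter

/-- Let `G` be a group with a right-invariant metric and a right-invariant Borel
measure `μ` giving positive finite measure to balls.  If `E` is a Borel set and
`g ∈ G` is such that `μ ((E·g) \ E) = 0`, then every point `x` of density `1` of `E`
yields a point `x·g` of density `1` of `E`. -/
theorem density_one_right_translate
    {G : Type*} [Group G] [MetricSpace G] [MeasurableSpace G] [BorelSpace G]
    (μ : Measure G)
    (hdist : ∀ x y g : G, dist (x * g) (y * g) = dist x y)
    (hinv : ∀ (A : Set G) (g : G), MeasurableSet A → μ ((fun a => a * g) '' A) = μ A)
    (hball : ∀ (x : G) (r : ℝ), 0 < r → 0 < μ (ball x r) ∧ μ (ball x r) < ⊤)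
    (E : Set G) (hE : MeasurableSet E) (g : G)
    (hnull : μ (((fun a => a * g) '' E) \ E) = 0)
    (x : G)
    (hx : Tendsto (fun r : ℝ => μ (ball x r ∩ E) / μ (ball x r))
      (nhdsWithin 0 (Set.Ioi 0)) (nhds 1)) :
    Tendsto (fun r : ℝ => μ (ball (x * g) r ∩ E) / μ (ball (x * g) r))
      (nhdsWithin 0 (Set.Ioi 0)) (nhds 1) := by
  -- ball translates
  have hballimg : ∀ (y : G) (r : ℝ), (fun a => a * g) '' (ball y r) = ball (y * g) r := by
    intro y r
    ext b
    constructor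
    · rintro ⟨a, ha, rfl⟩
      simpa [mem_ball, hdist a y g] using ha
    · intro hb
      refine ⟨b * g⁻¹, ?_, by group⟩
      have := hdist (b * g⁻¹) (y) g
      simp only [mul_assoc, inv_mul_cancel, mul_one] at this
      simpa [mem_ball, ← this] using hb
  -- image intersections
  have himg : ∀ r : ℝ, (fun a => a * g) '' (ball x r ∩ E)
      = ball (x * g) r ∩ ((fun a => a * g) '' E) := by
    intro r
    rw [Set.image_inter (fun a b h => by simpa using mul_right_cancel h), hballimg]
  have hmeasimg : ∀ (y : G) (r : ℝ), μ (ball (y * g) r) = μ (ball y r) := by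
    intro y r
    rw [← hballimg, hinv _ _ measurableSet_ball]
  -- lower bound
  have hlow : ∀ r : ℝ, μ (ball x r ∩ E) ≤ μ (ball (x * g) r ∩ E) := by
    intro r
    have h1 : μ (ball x r ∩ E) = μ (ball (x * g) r ∩ ((fun a => a * g) '' E)) := by
      rw [← himg, hinv _ _ (measurableSet_ball.inter hE)]
    have h2 : ball (x * g) r ∩ ((fun a => a * g) '' E)
        ⊆ (ball (x * g) r ∩ E) ∪ (((fun a => a * g) '' E) \ E) := by
      rintro b ⟨hb1, hb2⟩
      by_cases hbE : b ∈ E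
      · exact Or.inl ⟨hb1, hbE⟩
      · exact Or.inr ⟨hb2, hbE⟩
    calc μ (ball x r ∩ E) = _ := h1
      _ ≤ μ ((ball (x * g) r ∩ E) ∪ (((fun a => a * g) '' E) \ E)) := measure_mono h2
      _ ≤ μ (ball (x * g) r ∩ E) + μ (((fun a => a * g) '' E) \ E) := measure_union_le _ _
      _ = μ (ball (x * g) r ∩ E) := by rw [hnull, add_zero]
  refine tendsto_of_tendsto_of_tendsto_of_le_of_le' hx tendsto_const_nhds ?_ ?_
  · filter_upwards [self_mem_nhdsWithin] with r hr
    rw [← hmeasimg x r]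
    exact ENNReal.div_le_div_right (hlow r) _
  · filter_upwards [self_mem_nhdsWithin] with r (hr : 0 < r)
    have h := hball (x * g) r hr
    exact ENNReal.div_le_of_le_mul (by simpa using measure_mono Set.inter_subset_left)
end

section
/- Let G be a topological group whose topology is induced by a metric dist which is left-invariant (dist(g·x, g·y) = dist(x, y) for all g, x, y), and let μ be a left-invariant Borel measure on G (μ(g·A) = μ(A)) with 0 < μ(ball(x, r)) < ∞ for all x and r > 0. Let C ⊆ G be open and suppose there is a constant c > 0 such that μ(ball(1, r) ∩ C⁻¹) ≥ c·μ(ball(1, r)) for every r > 0. Let E ⊆ G satisfy E·C ⊆ E, and let D = {x ∈ G : μ(ball(x, r) ∩ E)/μ(ball(x, r)) → 1 as r → 0⁺} be the density-one set of E. Then D is open and D·C ⊆ D. -/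
/-!
A density-one point of `E` lies in the interior of `E`: left-translating the lower bound on `C⁻¹`
shows that a fixed proportion `c` of every ball around `x` lies in `x • C⁻¹`, so if `E` has
density tending to one at `x` it must meet `x • C⁻¹`, say at `x z⁻¹` with `z ∈ C`; then
`x ∈ (x z⁻¹) • C ⊆ E` with `(x z⁻¹) • C` open. Conversely interior points clearly have density one.
Hence the density-one set is `interior E`, which is open and, by the same argument, absorbs `C`
on the right.
-/

open MeasureTheory Metric Filter

-- `Pointwise` must not be open at the main theorem: there `C⁻¹` elaborates through
-- `Set.involutiveInv`, not the scoped `Set.inv` instance.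
section

open Set
open scoped Pointwise Topology

def IsDensityOnePoint {X : Type*} [PseudoMetricSpace X] [MeasurableSpace X] (μ : Measure X)
    (E : Set X) (x : X) : Prop :=
  Tendsto (fun r : ℝ => μ (ball x r ∩ E) / μ (ball x r)) (𝓝[>] 0) (𝓝 1)

theorem isDensityOnePoint_of_mem_interior {X : Type*} [PseudoMetricSpace X] [MeasurableSpace X]
    {μ : Measure X} {E : Set X} {x : X} (hx : x ∈ interior E)
    (hball : ∀ r : ℝ, 0 < r → 0 < μ (ball x r) ∧ μ (ball x r) < ⊤) :
    IsDensityOnePoint μ E x := by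
  obtain ⟨ε, hε, hεE⟩ := Metric.mem_nhds_iff.mp (mem_interior_iff_mem_nhds.mp hx)
  refine tendsto_const_nhds.congr' ?_
  filter_upwards [Ioo_mem_nhdsGT hε] with r hr
  rw [inter_eq_left.mpr ((ball_subset_ball hr.2.le).trans hεE),
    ENNReal.div_self (hball r hr.1).1.ne' (hball r hr.1).2.ne]

theorem mul_mem_interior_of_forall_mul_mem {G : Type*} [Group G] [TopologicalSpace G]
    [ContinuousConstSMul G G] {E C : Set G} (hEC : ∀ x ∈ E, ∀ z ∈ C, x * z ∈ E) (hC : IsOpen C)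
    {w z : G} (hw : w ∈ E) (hz : z ∈ C) : w * z ∈ interior E := by
  refine mem_interior.mpr ⟨w • C, ?_, hC.smul w, smul_mem_smul_set hz⟩
  rintro _ ⟨z', hz', rfl⟩
  exact hEC w hw z' hz'

theorem isIsometricSMul_of_dist_mul_left {G : Type*} [Group G] [PseudoMetricSpace G]
    (hdist : ∀ g x y : G, dist (g * x) (g * y) = dist x y) : IsIsometricSMul G G :=
  ⟨fun g => Isometry.of_dist_eq (hdist g)⟩

theorem smulInvariantMeasure_of_measure_image_mul_left {G : Type*} [Group G] [MeasurableSpace G]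
    {μ : Measure G}
    (hinv : ∀ (A : Set G) (g : G), MeasurableSet A → μ ((fun a => g * a) '' A) = μ A) :
    SMulInvariantMeasure G G μ :=
  ⟨fun g A hA => by simpa only [smul_eq_mul, ← image_mul_left', inv_inv] using hinv A g⁻¹ hA⟩

section LeftInvariant

variable {G : Type*} [Group G] [PseudoMetricSpace G] [IsIsometricSMul G G] [MeasurableSpace G]
  {μ : Measure G} [SMulInvariantMeasure G G μ]

theorem measure_ball_inter_smul (x : G) (r : ℝ) (S : Set G) :
    μ (ball x r ∩ x • S) = μ (ball 1 r ∩ S) := by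
  have hball : ball x r = x • ball 1 r := by rw [Metric.smul_ball, smul_eq_mul, mul_one]
  rw [hball, ← smul_set_inter, measure_smul]

theorem measure_ball_eq_measure_ball_one (x : G) (r : ℝ) : μ (ball x r) = μ (ball 1 r) := by
  simpa using measure_ball_inter_smul (μ := μ) x r univ

variable [MeasurableSMul G G] [OpensMeasurableSpace G]

theorem measure_ball_inter_div_le_one_sub_of_disjoint {x : G} {r : ℝ} {c : ENNReal}
    {E S : Set G} (hS : MeasurableSet S) (hES : Disjoint E (x • S))
    (hfin : μ (ball 1 r) ≠ ⊤) (hlow : c * μ (ball 1 r) ≤ μ (ball 1 r ∩ S)) :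
    μ (ball x r ∩ E) / μ (ball x r) ≤ 1 - c := by
  have hsub : ball x r ∩ E ⊆ ball x r \ (ball x r ∩ x • S) :=
    fun y hy => ⟨hy.1, fun hyS => hES.notMem_of_mem_left hy.2 hyS.2⟩
  have hfin' : μ (ball x r ∩ x • S) ≠ ⊤ := by
    rw [measure_ball_inter_smul]
    exact ((measure_mono inter_subset_left).trans_lt hfin.lt_top).ne
  refine ENNReal.div_le_of_le_mul ?_
  calc μ (ball x r ∩ E) ≤ μ (ball x r \ (ball x r ∩ x • S)) := measure_mono hsub
    _ = μ (ball x r) - μ (ball x r ∩ x • S) :=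
      measure_sdiff inter_subset_left
        (measurableSet_ball.inter (hS.const_smul x)).nullMeasurableSet hfin'
    _ ≤ μ (ball 1 r) - c * μ (ball 1 r) := by
      rw [measure_ball_inter_smul, measure_ball_eq_measure_ball_one]
      exact tsub_le_tsub_left hlow _
    _ = (1 - c) * μ (ball x r) := by
      rw [measure_ball_eq_measure_ball_one x, ENNReal.sub_mul fun _ _ => hfin, one_mul]

theorem IsDensityOnePoint.inter_smul_nonempty {x : G} {c : ENNReal} {E S : Set G}
    (hx : IsDensityOnePoint μ E x) (hS : MeasurableSet S) (hc : 0 < c)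
    (hfin : ∀ r : ℝ, 0 < r → μ (ball 1 r) ≠ ⊤)
    (hlow : ∀ r : ℝ, 0 < r → c * μ (ball 1 r) ≤ μ (ball 1 r ∩ S)) :
    (E ∩ x • S).Nonempty := by
  rw [← not_disjoint_iff_nonempty_inter]
  intro hES
  have hle : ∀ᶠ r in 𝓝[>] (0 : ℝ), μ (ball x r ∩ E) / μ (ball x r) ≤ 1 - c :=
    eventually_mem_nhdsWithin.mono fun r hr =>
      measure_ball_inter_div_le_one_sub_of_disjoint hS hES (hfin r hr) (hlow r hr)
  have hgt : ∀ᶠ r in 𝓝[>] (0 : ℝ), 1 - c < μ (ball x r ∩ E) / μ (ball x r) :=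
    hx (Ioi_mem_nhds (ENNReal.sub_lt_self ENNReal.one_ne_top one_ne_zero hc.ne'))
  obtain ⟨r, hr_le, hr_gt⟩ := (hle.and hgt).exists
  exact hr_le.not_gt hr_gt

variable [IsTopologicalGroup G]

theorem IsDensityOnePoint.mem_interior {x : G} {c : ENNReal} {E C : Set G}
    (hx : IsDensityOnePoint μ E x) (hC : IsOpen C) (hc : 0 < c)
    (hfin : ∀ r : ℝ, 0 < r → μ (ball 1 r) ≠ ⊤)
    (hlow : ∀ r : ℝ, 0 < r → c * μ (ball 1 r) ≤ μ (ball 1 r ∩ C⁻¹))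
    (hEC : ∀ x ∈ E, ∀ z ∈ C, x * z ∈ E) : x ∈ interior E := by
  obtain ⟨_, hwE, z, hz, rfl⟩ := hx.inter_smul_nonempty hC.inv.measurableSet hc hfin hlow
  simpa using mul_mem_interior_of_forall_mul_mem hEC hC hwE (mem_inv.mp hz)

theorem setOf_isDensityOnePoint_eq_interior {c : ENNReal} {E C : Set G} (hC : IsOpen C)
    (hc : 0 < c) (hball : ∀ (x : G) (r : ℝ), 0 < r → 0 < μ (ball x r) ∧ μ (ball x r) < ⊤)
    (hlow : ∀ r : ℝ, 0 < r → c * μ (ball 1 r) ≤ μ (ball 1 r ∩ C⁻¹))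
    (hEC : ∀ x ∈ E, ∀ z ∈ C, x * z ∈ E) : {x | IsDensityOnePoint μ E x} = interior E :=
  Subset.antisymm
    (fun _ hx => hx.mem_interior hC hc (fun r hr => (hball 1 r hr).2.ne) hlow hEC)
    (fun x hx => isDensityOnePoint_of_mem_interior hx (hball x))

end LeftInvariant

end

/-- Let `G` be a topological group whose topology comes from a left-invariant metric,
with a left-invariant Borel measure `μ` giving positive finite measure to balls.
Let `C` be open with a uniform lower density bound `μ (ball 1 r ∩ C⁻¹) ≥ c • μ (ball 1 r)`
for all `r > 0`, and let `E` satisfy `E·C ⊆ E`.  Then the density-one set `D` of `E`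
is open and satisfies `D·C ⊆ D`. -/
theorem density_one_set_open_and_cone_property
    {G : Type*} [Group G] [MetricSpace G] [IsTopologicalGroup G]
    [MeasurableSpace G] [BorelSpace G]
    (μ : Measure G)
    (hdist : ∀ g x y : G, dist (g * x) (g * y) = dist x y)
    (hinv : ∀ (A : Set G) (g : G), MeasurableSet A → μ ((fun a => g * a) '' A) = μ A)
    (hball : ∀ (x : G) (r : ℝ), 0 < r → 0 < μ (ball x r) ∧ μ (ball x r) < ⊤)
    (C : Set G) (hCopen : IsOpen C)
    (c : ENNReal) (hc : 0 < c)
    (hlow : ∀ r : ℝ, 0 < r → c * μ (ball (1 : G) r) ≤ μ (ball (1 : G) r ∩ C⁻¹))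
    (E : Set G) (hEC : ∀ x ∈ E, ∀ z ∈ C, x * z ∈ E) :
    IsOpen {x : G | Tendsto (fun r : ℝ => μ (ball x r ∩ E) / μ (ball x r))
        (nhdsWithin 0 (Set.Ioi 0)) (nhds 1)} ∧
    (∀ x ∈ {x : G | Tendsto (fun r : ℝ => μ (ball x r ∩ E) / μ (ball x r))
        (nhdsWithin 0 (Set.Ioi 0)) (nhds 1)}, ∀ z ∈ C,
      x * z ∈ {x : G | Tendsto (fun r : ℝ => μ (ball x r ∩ E) / μ (ball x r))
        (nhdsWithin 0 (Set.Ioi 0)) (nhds 1)}) := by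
  have := isIsometricSMul_of_dist_mul_left hdist
  have := smulInvariantMeasure_of_measure_image_mul_left hinv
  change IsOpen {x | IsDensityOnePoint μ E x} ∧
    ∀ x ∈ {x | IsDensityOnePoint μ E x}, ∀ z ∈ C, x * z ∈ {x | IsDensityOnePoint μ E x}
  rw [setOf_isDensityOnePoint_eq_interior hCopen hc hball hlow hEC]
  exact ⟨isOpen_interior, fun x hx z hz =>
    mul_mem_interior_of_forall_mul_mem hEC hCopen (interior_subset hx) hz⟩
end

section
/- Let G be a topological group equipped with dilations δ as in the context. Then every nonempty subsemigroup S ⊆ G satisfying δ_t(S) = S for all t > 0 (a conical semigroup) is contractible as a topological space (with the subspace topology). -/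
/-!
A conical semigroup contracts onto any of its points `x₀` along
`H(t, x) = δ_{1-t}(x) · δ_t(x₀)`, a multiplicative analogue of the straight-line contraction
of a convex cone. For `0 < t < 1` both factors lie in `S` (dilations preserve `S`), hence so
does their product; at `t = 0` and `t = 1` one factor is `1` and the other is `x` or `x₀`.
-/

section ConicalSemigroup

variable {M : Type*} {δ : ℝ → M → M} {S : Set M}

theorem Continuous.dilation_comp [TopologicalSpace M] {X : Type*} [TopologicalSpace X]
    (hcont : ContinuousOn (fun p : ℝ × M => δ p.1 p.2) (Set.Ici 0 ×ˢ Set.univ))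
    {τ : X → ℝ} {f : X → M} (hτ : Continuous τ) (hf : Continuous f) (hτ_nonneg : ∀ x, 0 ≤ τ x) :
    Continuous fun x => δ (τ x) (f x) :=
  hcont.comp_continuous (hτ.prodMk hf) fun x => ⟨hτ_nonneg x, trivial⟩

variable [MulOneClass M]

theorem dilation_mul_dilation_mem (hone : ∀ x, δ 1 x = x) (hzero : ∀ x, δ 0 x = 1)
    (hmul : ∀ x ∈ S, ∀ y ∈ S, x * y ∈ S) (hcone : ∀ t : ℝ, 0 < t → Set.MapsTo (δ t) S S)
    {t : ℝ} (ht : t ∈ Set.Icc (0 : ℝ) 1) {x y : M} (hx : x ∈ S) (hy : y ∈ S) :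
    δ (1 - t) x * δ t y ∈ S := by
  rcases ht.1.eq_or_lt with rfl | ht₀
  · simpa [hone, hzero] using hx
  rcases ht.2.eq_or_lt with rfl | ht₁
  · simpa [hone, hzero] using hy
  exact hmul _ (hcone _ (sub_pos.2 ht₁) hx) _ (hcone _ ht₀ hy)

variable [TopologicalSpace M] [ContinuousMul M]

def conicalContraction (hone : ∀ x, δ 1 x = x) (hzero : ∀ x, δ 0 x = 1)
    (hcont : ContinuousOn (fun p : ℝ × M => δ p.1 p.2) (Set.Ici 0 ×ˢ Set.univ))
    (hmul : ∀ x ∈ S, ∀ y ∈ S, x * y ∈ S) (hcone : ∀ t : ℝ, 0 < t → Set.MapsTo (δ t) S S)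
    (x₀ : S) : ContinuousMap.Homotopy (ContinuousMap.id S) (ContinuousMap.const S x₀) where
  toFun p := ⟨δ (1 - p.1) p.2 * δ p.1 x₀,
    dilation_mul_dilation_mem hone hzero hmul hcone p.1.2 p.2.2 x₀.2⟩
  continuous_toFun := by
    refine Continuous.subtype_mk (Continuous.mul ?_ ?_) _
    · exact Continuous.dilation_comp hcont (by fun_prop) (by fun_prop)
        fun p => sub_nonneg.2 p.1.2.2
    · exact Continuous.dilation_comp hcont (by fun_prop) continuous_const fun p => p.1.2.1
  map_zero_left x := Subtype.ext <| by simp [hone, hzero]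
  map_one_left x := Subtype.ext <| by simp [hone, hzero]

theorem contractibleSpace_of_isConical (hone : ∀ x, δ 1 x = x) (hzero : ∀ x, δ 0 x = 1)
    (hcont : ContinuousOn (fun p : ℝ × M => δ p.1 p.2) (Set.Ici 0 ×ˢ Set.univ))
    (hne : S.Nonempty) (hmul : ∀ x ∈ S, ∀ y ∈ S, x * y ∈ S)
    (hcone : ∀ t : ℝ, 0 < t → Set.MapsTo (δ t) S S) :
    ContractibleSpace S := by
  obtain ⟨x₀, hx₀⟩ := hne
  rw [contractible_iff_id_nullhomotopic]
  exact ⟨⟨x₀, hx₀⟩, ⟨conicalContraction hone hzero hcont hmul hcone ⟨x₀, hx₀⟩⟩⟩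

end ConicalSemigroup

theorem conical_semigroup_contractible_general
    {G : Type*} [Group G] [TopologicalSpace G] [IsTopologicalGroup G]
    (δ : ℝ → G → G)
    (hone : ∀ x : G, δ 1 x = x)
    (hzero : ∀ x : G, δ 0 x = 1)
    (hcont : ContinuousOn (fun p : ℝ × G => δ p.1 p.2) (Set.Ici 0 ×ˢ Set.univ))
    (S : Set G) (hne : S.Nonempty)
    (hmul : ∀ x ∈ S, ∀ y ∈ S, x * y ∈ S)
    (hcone : ∀ t : ℝ, 0 < t → δ t '' S = S) :
    ContractibleSpace ↥S :=
  contractibleSpace_of_isConical hone hzero hcont hne hmul fun t ht =>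
    Set.mapsTo_iff_image_subset.2 (hcone t ht).subset

/-- In a topological group `G` equipped with a family of dilations `δ`, every nonempty
subsemigroup `S` with `δ_t (S) = S` for all `t > 0` (a conical semigroup) is
contractible as a topological space. -/
theorem conical_semigroup_contractible
    {G : Type*} [Group G] [TopologicalSpace G] [IsTopologicalGroup G]
    (δ : ℝ → G → G)
    (hhom : ∀ t : ℝ, 0 ≤ t → ∀ x y : G, δ t (x * y) = δ t x * δ t y)
    (hone : ∀ x : G, δ 1 x = x)
    (hcomp : ∀ s t : ℝ, 0 ≤ s → 0 ≤ t → ∀ x : G, δ s (δ t x) = δ (s * t) x)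
    (hzero : ∀ x : G, δ 0 x = 1)
    (hcont : ContinuousOn (fun p : ℝ × G => δ p.1 p.2) (Set.Ici 0 ×ˢ Set.univ))
    (S : Set G) (hne : S.Nonempty)
    (hmul : ∀ x ∈ S, ∀ y ∈ S, x * y ∈ S)
    (hcone : ∀ t : ℝ, 0 < t → δ t '' S = S) :
    ContractibleSpace ↥S :=
  conical_semigroup_contractible_general δ hone hzero hcont S hne hmul hcone
end

section
/- Let G be a topological group equipped with dilations δ as in the context. Let S ⊆ G be a subsemigroup with nonempty interior satisfying δ_t(S) = S for all t > 0. Then S is almost regular: S ⊆ closure(interior(S)). -/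
/-!
Left translation by `x ∈ S` is a homeomorphism mapping `S` into `S`, so once `1` is a limit of
interior points of `S`, every `x ∈ S` is a limit of interior points too. For the former, pick
`u ∈ interior S`: each `δ_t` with `t > 0` is a homeomorphism (with inverse `δ_{1/t}`) preserving
`S`, hence `interior S`, and `δ_t u → δ_0 u = 1` as `t → 0⁺`.
-/

open Set Filter Topology Pointwise

lemma subset_closure_interior_of_one_mem_closure {G : Type*} [Group G] [TopologicalSpace G]
    [ContinuousMul G] {S : Set G} (hmul : ∀ x ∈ S, ∀ y ∈ S, x * y ∈ S)
    (h1 : (1 : G) ∈ closure (interior S)) : S ⊆ closure (interior S) := by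
  intro x hx
  have hxS : x • S ⊆ S := by
    rintro _ ⟨y, hy, rfl⟩
    exact hmul x hx y hy
  have hx' : x ∈ closure (interior (x • S)) := by
    rw [interior_smul, closure_smul]
    simpa using smul_mem_smul_set (a := x) h1
  exact closure_mono (interior_mono hxS) hx'

section Dilation

variable {X : Type*} [TopologicalSpace X] {δ : ℝ → X → X}

lemma continuous_of_continuousOn_Ici_prod
    (hcont : ContinuousOn (fun p : ℝ × X => δ p.1 p.2) (Ici 0 ×ˢ univ)) {t : ℝ} (ht : 0 < t) :
    Continuous (δ t) :=
  continuous_iff_continuousAt.2 fun _ =>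
    (hcont.continuousAt (prod_mem_nhds (Ici_mem_nhds ht) univ_mem)).comp
      (continuous_const.prodMk continuous_id).continuousAt

lemma tendsto_nhdsGT_zero_of_continuousOn_Ici_prod
    (hcont : ContinuousOn (fun p : ℝ × X => δ p.1 p.2) (Ici 0 ×ˢ univ)) (x : X) :
    Tendsto (fun t => δ t x) (𝓝[>] 0) (𝓝 (δ 0 x)) := by
  have hpath : Tendsto (fun t : ℝ => (t, x)) (𝓝[>] 0) (𝓝[Ici 0 ×ˢ univ] (0, x)) :=
    tendsto_nhdsWithin_iff.2
      ⟨((continuous_id.prodMk continuous_const).tendsto 0).mono_left nhdsWithin_le_nhds,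
        eventually_nhdsWithin_of_forall fun t ht => ⟨mem_Ici.2 (le_of_lt ht), trivial⟩⟩
  exact (hcont (0, x) ⟨self_mem_Ici, trivial⟩).tendsto.comp hpath

noncomputable def dilationHomeomorph (hone : ∀ x, δ 1 x = x)
    (hcomp : ∀ s t : ℝ, 0 ≤ s → 0 ≤ t → ∀ x, δ s (δ t x) = δ (s * t) x)
    (hcont : ContinuousOn (fun p : ℝ × X => δ p.1 p.2) (Ici 0 ×ˢ univ)) {t : ℝ} (ht : 0 < t) :
    X ≃ₜ X where
  toFun := δ t
  invFun := δ t⁻¹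
  left_inv x := by
    rw [hcomp _ _ (inv_nonneg.2 ht.le) ht.le, inv_mul_cancel₀ ht.ne', hone]
  right_inv x := by
    rw [hcomp _ _ ht.le (inv_nonneg.2 ht.le), mul_inv_cancel₀ ht.ne', hone]
  continuous_toFun := continuous_of_continuousOn_Ici_prod hcont ht
  continuous_invFun := continuous_of_continuousOn_Ici_prod hcont (inv_pos.2 ht)

lemma image_interior_of_image_eq (hone : ∀ x, δ 1 x = x)
    (hcomp : ∀ s t : ℝ, 0 ≤ s → 0 ≤ t → ∀ x, δ s (δ t x) = δ (s * t) x)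
    (hcont : ContinuousOn (fun p : ℝ × X => δ p.1 p.2) (Ici 0 ×ˢ univ)) {t : ℝ} (ht : 0 < t)
    {S : Set X} (hS : δ t '' S = S) : δ t '' interior S = interior S := by
  have h : δ t '' interior S = interior (δ t '' S) :=
    (dilationHomeomorph hone hcomp hcont ht).image_interior S
  rwa [hS] at h

end Dilation

lemma one_mem_closure_interior_of_dilation_invariant {G : Type*} [Group G] [TopologicalSpace G]
    {δ : ℝ → G → G} (hone : ∀ x, δ 1 x = x)
    (hcomp : ∀ s t : ℝ, 0 ≤ s → 0 ≤ t → ∀ x, δ s (δ t x) = δ (s * t) x)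
    (hzero : ∀ x, δ 0 x = 1)
    (hcont : ContinuousOn (fun p : ℝ × G => δ p.1 p.2) (Ici 0 ×ˢ univ))
    {S : Set G} (hint : (interior S).Nonempty) (hcone : ∀ t : ℝ, 0 < t → δ t '' S = S) :
    (1 : G) ∈ closure (interior S) := by
  obtain ⟨u, hu⟩ := hint
  have hlim := tendsto_nhdsGT_zero_of_continuousOn_Ici_prod hcont u
  rw [hzero] at hlim
  refine mem_closure_of_tendsto hlim (eventually_nhdsWithin_of_forall fun t ht => ?_)
  rw [← image_interior_of_image_eq hone hcomp hcont ht (hcone t ht)]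
  exact mem_image_of_mem _ hu

theorem conical_semigroup_almost_regular_general
    {G : Type*} [Group G] [TopologicalSpace G] [IsTopologicalGroup G]
    (δ : ℝ → G → G)
    (hone : ∀ x : G, δ 1 x = x)
    (hcomp : ∀ s t : ℝ, 0 ≤ s → 0 ≤ t → ∀ x : G, δ s (δ t x) = δ (s * t) x)
    (hzero : ∀ x : G, δ 0 x = 1)
    (hcont : ContinuousOn (fun p : ℝ × G => δ p.1 p.2) (Set.Ici 0 ×ˢ Set.univ))
    (S : Set G)
    (hmul : ∀ x ∈ S, ∀ y ∈ S, x * y ∈ S)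
    (hint : (interior S).Nonempty)
    (hcone : ∀ t : ℝ, 0 < t → δ t '' S = S) :
    S ⊆ closure (interior S) :=
  subset_closure_interior_of_one_mem_closure hmul
    (one_mem_closure_interior_of_dilation_invariant hone hcomp hzero hcont hint hcone)

/-- In a topological group `G` equipped with a family of dilations `δ`, every
subsemigroup `S` with nonempty interior and `δ_t (S) = S` for all `t > 0` is almost
regular: `S ⊆ closure (interior S)`. -/
theorem conical_semigroup_almost_regular
    {G : Type*} [Group G] [TopologicalSpace G] [IsTopologicalGroup G]
    (δ : ℝ → G → G)
    (hhom : ∀ t : ℝ, 0 ≤ t → ∀ x y : G, δ t (x * y) = δ t x * δ t y)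
    (hone : ∀ x : G, δ 1 x = x)
    (hcomp : ∀ s t : ℝ, 0 ≤ s → 0 ≤ t → ∀ x : G, δ s (δ t x) = δ (s * t) x)
    (hzero : ∀ x : G, δ 0 x = 1)
    (hcont : ContinuousOn (fun p : ℝ × G => δ p.1 p.2) (Set.Ici 0 ×ˢ Set.univ))
    (S : Set G)
    (hmul : ∀ x ∈ S, ∀ y ∈ S, x * y ∈ S)
    (hint : (interior S).Nonempty)
    (hcone : ∀ t : ℝ, 0 < t → δ t '' S = S) :
    S ⊆ closure (interior S) :=
  conical_semigroup_almost_regular_general δ hone hcomp hzero hcont S hmul hint hcone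
end

section
/- In 𝔽₂₃, let A₁ = {(a,0,0,0,0) : a ∈ ℝ} ∪ {(at, t, −at²/2, a²t³/6, at³/3) : a ∈ ℝ, t > 0} and let S₁ be the subsemigroup of (ℝ⁵, ∗) generated by A₁. Then for all a, b ∈ ℝ the point (a, b, −ab/2, a²b/6, ab²/3) (the exponential of the horizontal vector aX₁ + bX₂) does not belong to the topological interior of S₁. In particular, no horizontal exponential lies in the interior of the generated semigroup. -/
/-- The group operation of the free Carnot group `𝔽₂₃` of rank 2 and step 3, in
exponential coordinates of the second kind on `ℝ⁵`. -/
noncomputable def F23mul (x y : Fin 5 → ℝ) : Fin 5 → ℝ :=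
  ![x 0 + y 0,
    x 1 + y 1,
    x 2 + y 2 - x 0 * y 1,
    x 3 + y 3 - x 0 * y 2 + x 0 ^ 2 * y 1 / 2,
    x 4 + y 4 + x 0 * x 1 * y 1 + x 0 * y 1 ^ 2 / 2 - x 1 * y 2]

/-- The smallest subset of `α` containing `A` and closed under `mul`
(the subsemigroup generated by `A`). -/
def genSemigroup {α : Type*} (mul : α → α → α) (A : Set α) : Set α :=
  ⋂₀ {S : Set α | A ⊆ S ∧ ∀ x ∈ S, ∀ y ∈ S, mul x y ∈ S}

/-- The exponential image of the closed horizontal half-space with inner normal `X₂`. -/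
noncomputable def A1 : Set (Fin 5 → ℝ) :=
  {p | ∃ a : ℝ, p = ![a, 0, 0, 0, 0]} ∪
  {p | ∃ a t : ℝ, 0 < t ∧
    p = ![a * t, t, -(a * t ^ 2) / 2, a ^ 2 * t ^ 3 / 6, a * t ^ 3 / 3]}

/-- The family of Cauchy–Schwarz functionals certifying the boundary. -/
noncomputable def Ffun (α β : ℝ) (x : Fin 5 → ℝ) : ℝ :=
  2 * x 3 + 2 * α * x 2 - 2 * β * x 4 + α ^ 2 * x 1 + α * β * (x 1) ^ 2
    + β ^ 2 * (x 1) ^ 3 / 3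

/-- The invariant closed set containing the semigroup. -/
noncomputable def Tset : Set (Fin 5 → ℝ) :=
  {x | 0 ≤ x 1 ∧ ∀ α β : ℝ, 0 ≤ Ffun α β x}

lemma A1_subset_Tset : A1 ⊆ Tset := by
  rintro p (⟨a, rfl⟩ | ⟨a, t, ht, rfl⟩)
  · constructor
    · simp
    · intro α β
      simp [Ffun]
  · constructor
    · simpa using ht.le
    · intro α β
      have h : Ffun α β ![a * t, t, -(a * t ^ 2) / 2, a ^ 2 * t ^ 3 / 6, a * t ^ 3 / 3]
          = (a - β) ^ 2 * t ^ 3 / 3 - α * (a - β) * t ^ 2 + α ^ 2 * t := by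
        simp [Ffun]; ring
      rw [h]
      nlinarith [sq_nonneg (2 * (a - β) * t - 3 * α), mul_pos ht ht, sq_nonneg α,
        mul_nonneg (mul_nonneg ht.le ht.le) ht.le, sq_nonneg ((a - β) * t),
        mul_nonneg ht.le (sq_nonneg (2 * (a - β) * t - 3 * α))]

lemma Tset_mul_closed : ∀ x ∈ Tset, ∀ y ∈ Tset, F23mul x y ∈ Tset := by
  rintro x ⟨hx1, hxF⟩ y ⟨hy1, hyF⟩
  constructor
  · show (0:ℝ) ≤ F23mul x y 1
    simp [F23mul]
    linarith
  · intro α β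
    have key : Ffun α β (F23mul x y)
        = Ffun α β x + Ffun (α + β * x 1 - x 0) β y := by
      simp [Ffun, F23mul]; ring
    rw [key]
    exact add_nonneg (hxF α β) (hyF _ β)

lemma gen_subset_Tset : genSemigroup F23mul A1 ⊆ Tset := by
  intro x hx
  exact hx Tset ⟨A1_subset_Tset, Tset_mul_closed⟩

/-- In `𝔽₂₃`, no exponential `exp(aX₁ + bX₂)` of a horizontal vector lies in the
topological interior of the semigroup generated by the closed horizontal half-space
with inner normal `X₂`. -/
theorem F23_no_horizontal_exponential_in_interior :
    ∀ a b : ℝ,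
      ![a, b, -(a * b) / 2, a ^ 2 * b / 6, a * b ^ 2 / 3] ∉
        interior (genSemigroup F23mul A1) := by
  intro a b hmem
  set p : Fin 5 → ℝ := ![a, b, -(a * b) / 2, a ^ 2 * b / 6, a * b ^ 2 / 3] with hp
  have hTi : p ∈ interior Tset :=
    interior_mono gen_subset_Tset hmem
  rw [mem_interior_iff_mem_nhds, Metric.mem_nhds_iff] at hTi
  obtain ⟨ε, hε, hball⟩ := hTi
  rcases le_or_gt b 0 with hb | hb
  · -- perturb coordinate 1 downward
    set q : Fin 5 → ℝ := Function.update p 1 (b - ε / 2) with hq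
    have hqball : q ∈ Metric.ball p ε := by
      rw [Metric.mem_ball]
      have : dist q p ≤ ε / 2 := by
        rw [dist_pi_le_iff (by linarith)]
        intro i
        rcases eq_or_ne i 1 with rfl | hi
        · have hp1 : p 1 = b := by simp [hp]
          simp only [hq, Function.update_self, Real.dist_eq, hp1]
          rw [show b - ε / 2 - b = -(ε/2) by ring, abs_neg, abs_of_nonneg (by linarith)]
        · simp [hq, Function.update_of_ne hi]
          linarith
      linarith
    have hqT := hball hqball
    have : (0:ℝ) ≤ q 1 := hqT.1
    simp [hq] at this
    linarith
  · -- perturb coordinate 3 downward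
    set q : Fin 5 → ℝ := Function.update p 3 (a ^ 2 * b / 6 - ε / 2) with hq
    have hqball : q ∈ Metric.ball p ε := by
      rw [Metric.mem_ball]
      have : dist q p ≤ ε / 2 := by
        rw [dist_pi_le_iff (by linarith)]
        intro i
        rcases eq_or_ne i 3 with rfl | hi
        · have hp3 : p 3 = a ^ 2 * b / 6 := by simp [hp]
          simp only [hq, Function.update_self, Real.dist_eq, hp3]
          rw [show a ^ 2 * b / 6 - ε / 2 - a ^ 2 * b / 6 = -(ε/2) by ring, abs_neg,
            abs_of_nonneg (by linarith)]
        · simp [hq, Function.update_of_ne hi]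
          linarith
      linarith
    have hqT := hball hqball
    have hF := hqT.2 0 (a / b)
    have hq0 : q 0 = a := by simp [hq, hp]
    have hq1 : q 1 = b := by simp [hq, hp]
    have hq2 : q 2 = -(a * b) / 2 := by simp [hq, hp]
    have hq3 : q 3 = a ^ 2 * b / 6 - ε / 2 := by simp [hq]
    have hq4 : q 4 = a * b ^ 2 / 3 := by simp [hq, hp]
    have hFval : Ffun 0 (a / b) q = -ε := by
      simp only [Ffun, hq1, hq2, hq3, hq4]
      field_simp
      ring
    rw [hFval] at hF
    linarith
end

section
/- There exists a compact set K ⊆ [0,1] of positive Lebesgue measure such that for every μ > 0, the function f : ℝ → ℝ defined by f(x) = inf_{t ∈ K} μ^{−1/3}·((x − t)²)^{1/3} satisfies: (i) f is nonnegative and Hölder continuous with exponent 2/3, namely |f(x) − f(y)| ≤ μ^{−1/3}·|x − y|^{2/3} for all x, y ∈ ℝ; (ii) the set W_μ = {(x, y) ∈ ℝ² : ∃ t ∈ K, (x − t)² ≤ μ·y³} equals the upper graph {(x, y) ∈ ℝ² : y ≥ f(x)}; and (iii) f does not have locally bounded variation on ℝ (¬ LocallyBoundedVariationOn f univ). -/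
/-!
With `xₙ = 1 - 1/√(n+1)`, remove from `[0,1]` the open interval of radius `rₙ = (xₙ₊₁ - xₙ)/4`
centred in `[xₙ, xₙ₊₁]`; the removed length telescopes to at most `1/2`, so the remaining compact
set `K` has positive measure.

For closed nonempty `K` the infimum equals `μ^{-1/3} d(x,K)^{2/3}`. Hölder continuity follows
because `d(·,K)` is 1-Lipschitz and `s ↦ s^{2/3}` is `2/3`-Hölder on `[0,∞)`, and the upper graph is
`W_μ` because the distance is attained. The function vanishes at the left end of the `n`-th gap and
is at least `μ^{-1/3} rₙ^{2/3} ≥ μ^{-1/3}/(4(n+2))` at its centre, so its variation on `[0,1]`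
dominates a harmonic series.
-/

open MeasureTheory Set Metric

theorem Real.abs_rpow_sub_rpow_le {a b p : ℝ} (ha : 0 ≤ a) (hb : 0 ≤ b) (hp : 0 ≤ p)
    (hp1 : p ≤ 1) : |a ^ p - b ^ p| ≤ |a - b| ^ p := by
  wlog hba : b ≤ a generalizing a b
  · rw [abs_sub_comm, abs_sub_comm a]
    exact this hb ha (le_of_not_ge hba)
  have hsub : a ^ p ≤ b ^ p + (a - b) ^ p := by
    simpa using Real.rpow_add_le_add_rpow hb (sub_nonneg.2 hba) hp hp1
  rw [abs_of_nonneg (sub_nonneg.2 (Real.rpow_le_rpow hb hba hp)),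
    abs_of_nonneg (sub_nonneg.2 hba)]
  linarith

theorem Real.sq_le_rpow_two_div_three {a r : ℝ} (ha : 0 ≤ a) (h : a ^ 3 ≤ r) :
    a ^ 2 ≤ r ^ ((2 : ℝ) / 3) := by
  calc a ^ 2 = (a ^ 3) ^ ((2 : ℝ) / 3) := by
        rw [← Real.rpow_natCast a 3, ← Real.rpow_mul ha]; norm_num
    _ ≤ r ^ ((2 : ℝ) / 3) := Real.rpow_le_rpow (by positivity) h (by norm_num)

theorem Real.rpow_neg_one_div_three_mul_le_iff {μ r y : ℝ} (hμ : 0 < μ) (hr : 0 ≤ r) :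
    μ ^ (-(1 : ℝ) / 3) * r ^ ((2 : ℝ) / 3) ≤ y ↔ r ^ 2 ≤ μ * y ^ 3 := by
  rcases lt_or_ge y 0 with hy | hy
  · have hlhs : 0 ≤ μ ^ (-(1 : ℝ) / 3) * r ^ ((2 : ℝ) / 3) :=
      mul_nonneg (Real.rpow_nonneg hμ.le _) (Real.rpow_nonneg hr _)
    have hrhs : μ * y ^ 3 < 0 := mul_neg_of_pos_of_neg hμ (Odd.pow_neg (by decide) hy)
    exact iff_of_false (fun h => by linarith) (fun h => by linarith [sq_nonneg r])
  have hcube : ∀ z : ℝ, 0 ≤ z → (z ^ ((1 : ℝ) / 3)) ^ 3 = z := fun z hz => by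
    rw [← Real.rpow_natCast, ← Real.rpow_mul hz]; norm_num
  have hμ3 : (0 : ℝ) < μ ^ ((1 : ℝ) / 3) := Real.rpow_pos_of_pos hμ _
  rw [neg_div, Real.rpow_neg hμ.le, inv_mul_le_iff₀ hμ3,
    ← pow_le_pow_iff_left₀ (Real.rpow_nonneg hr _) (by positivity) three_ne_zero, mul_pow,
    hcube μ hμ.le, ← Real.rpow_natCast, ← Real.rpow_mul hr]
  norm_num

namespace Metric

theorem abs_mul_infDist_rpow_sub_le {α : Type*} [PseudoMetricSpace α] (K : Set α) {c p : ℝ}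
    (hc : 0 ≤ c) (hp : 0 ≤ p) (hp1 : p ≤ 1) (x y : α) :
    |c * infDist x K ^ p - c * infDist y K ^ p| ≤ c * dist x y ^ p := by
  have hlip : |infDist x K - infDist y K| ≤ dist x y := by
    simpa [Real.dist_eq] using (lipschitz_infDist_pt K).dist_le_mul x y
  rw [← mul_sub, abs_mul, abs_of_nonneg hc]
  gcongr
  exact (Real.abs_rpow_sub_rpow_le infDist_nonneg infDist_nonneg hp hp1).trans
    (Real.rpow_le_rpow (abs_nonneg _) hlip hp)

variable {K : Set ℝ}

theorem iInf_mul_sq_sub_rpow_eq (hK : IsClosed K) (hne : K.Nonempty) {c : ℝ} (hc : 0 ≤ c)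
    (x : ℝ) :
    ⨅ t : K, c * ((x - (t : ℝ)) ^ 2) ^ ((1 : ℝ) / 3) = c * infDist x K ^ ((2 : ℝ) / 3) := by
  have hterm : ∀ t : ℝ, ((x - t) ^ 2) ^ ((1 : ℝ) / 3) = dist x t ^ ((2 : ℝ) / 3) := fun t => by
    rw [Real.dist_eq, ← sq_abs, ← Real.rpow_natCast, ← Real.rpow_mul (abs_nonneg _)]
    norm_num
  simp_rw [hterm]
  have : Nonempty K := hne.to_subtype
  obtain ⟨t₀, ht₀, hd⟩ := hK.exists_infDist_eq_dist hne x
  refine le_antisymm ?_ (le_ciInf fun t => ?_)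
  · refine (ciInf_le ⟨0, ?_⟩ ⟨t₀, ht₀⟩).trans_eq (by rw [hd])
    rintro _ ⟨t, rfl⟩
    positivity
  · gcongr
    exacts [infDist_nonneg, infDist_le_dist_of_mem t.2]

theorem exists_mem_sq_sub_le_iff (hK : IsClosed K) (hne : K.Nonempty) (x a : ℝ) :
    (∃ t ∈ K, (x - t) ^ 2 ≤ a) ↔ infDist x K ^ 2 ≤ a := by
  constructor
  · rintro ⟨t, ht, hta⟩
    refine le_trans ?_ hta
    rw [← sq_abs (x - t), ← Real.dist_eq]
    gcongr
    exacts [infDist_nonneg, infDist_le_dist_of_mem ht]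
  · intro h
    obtain ⟨t₀, ht₀, hd⟩ := hK.exists_infDist_eq_dist hne x
    exact ⟨t₀, ht₀, by rwa [hd, Real.dist_eq, sq_abs] at h⟩

theorem setOf_exists_sq_sub_le_eq (hK : IsClosed K) (hne : K.Nonempty) {μ : ℝ} (hμ : 0 < μ) :
    {p : ℝ × ℝ | ∃ t ∈ K, (p.1 - t) ^ 2 ≤ μ * p.2 ^ 3} =
      {p : ℝ × ℝ | μ ^ (-(1 : ℝ) / 3) * infDist p.1 K ^ ((2 : ℝ) / 3) ≤ p.2} := by
  ext p
  simp only [mem_ofPred_eq, exists_mem_sq_sub_le_iff hK hne,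
    Real.rpow_neg_one_div_three_mul_le_iff hμ infDist_nonneg]

end Metric

section Variation

variable {α E : Type*} [LinearOrder α] {s : Set α} {a b : ℕ → α}

theorem eVariationOn.sum_edist_le [PseudoEMetricSpace E] (f : α → E)
    (hab : ∀ n, a n ≤ b n) (hba : ∀ n, b n ≤ a (n + 1)) (ha : ∀ n, a n ∈ s) (hb : ∀ n, b n ∈ s)
    (N : ℕ) : ∑ n ∈ Finset.range N, edist (f (b n)) (f (a n)) ≤ eVariationOn f s := by
  let u : ℕ → α := fun i => if i % 2 = 0 then a (i / 2) else b (i / 2)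
  have hu : Monotone u := monotone_nat_of_le_succ fun i => by
    rcases Nat.mod_two_eq_zero_or_one i with h | h
    · have h' : (i + 1) % 2 = 1 := by omega
      simp only [u, h, h', if_true, if_false, Nat.one_ne_zero]
      rw [show (i + 1) / 2 = i / 2 by omega]
      exact hab _
    · have h' : (i + 1) % 2 = 0 := by omega
      simp only [u, h, h', if_true, if_false, Nat.one_ne_zero]
      rw [show (i + 1) / 2 = i / 2 + 1 by omega]
      exact hba _
  have hus : ∀ i, u i ∈ s := fun i => by
    simp only [u]; split_ifs
    exacts [ha _, hb _]
  calc ∑ n ∈ Finset.range N, edist (f (b n)) (f (a n))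
      = ∑ i ∈ (Finset.range N).image (2 * ·), edist (f (u (i + 1))) (f (u i)) := by
        rw [Finset.sum_image fun _ _ _ _ h => by omega]
        refine Finset.sum_congr rfl fun n _ => ?_
        simp [u, show (2 * n + 1) / 2 = n by omega]
    _ ≤ ∑ i ∈ Finset.range (2 * N), edist (f (u (i + 1))) (f (u i)) :=
        Finset.sum_le_sum_of_subset fun i => by
          simp only [Finset.mem_image, Finset.mem_range]; omega
    _ ≤ eVariationOn f s := eVariationOn.sum_le hu hus

theorem summable_dist_of_eVariationOn_ne_top [PseudoMetricSpace E] {f : α → E}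
    (hV : eVariationOn f s ≠ ⊤)
    (hab : ∀ n, a n ≤ b n) (hba : ∀ n, b n ≤ a (n + 1)) (ha : ∀ n, a n ∈ s) (hb : ∀ n, b n ∈ s) :
    Summable fun n => dist (f (b n)) (f (a n)) :=
  summable_of_sum_range_le (fun _ => dist_nonneg) fun N => by
    rw [← ENNReal.ofReal_le_iff_le_toReal hV, ENNReal.ofReal_sum_of_nonneg fun _ _ => dist_nonneg]
    simpa only [← edist_dist] using eVariationOn.sum_edist_le f hab hba ha hb N

end Variation

theorem one_div_two_mul_pow_three_le_one_div_sub_one_div {s t : ℝ} (hs : 0 < s) (hst : s ≤ t)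
    (h : t ^ 2 = s ^ 2 + 1) : 1 / (2 * t ^ 3) ≤ 1 / s - 1 / t := by
  have ht : 0 < t := hs.trans_le hst
  have hprod : (t - s) * (t + s) = 1 := by nlinarith
  rw [div_sub_div _ _ hs.ne' ht.ne', div_le_div_iff₀ (by positivity) (by positivity)]
  nlinarith [mul_nonneg ht.le (mul_nonneg (sub_nonneg.2 hst) (by linarith : 0 ≤ 2 * t + s)),
    mul_pos hs ht]

namespace FatCantor

noncomputable def node (n : ℕ) : ℝ := 1 - 1 / √(n + 1)

noncomputable def gapCenter (n : ℕ) : ℝ := (node n + node (n + 1)) / 2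

noncomputable def gapRadius (n : ℕ) : ℝ := (node (n + 1) - node n) / 4

theorem node_strictMono : StrictMono node := strictMono_nat_of_lt_succ fun n => by
  unfold node
  push_cast
  gcongr
  linarith

theorem node_zero : node 0 = 0 := by simp [node]

theorem node_nonneg (n : ℕ) : 0 ≤ node n := node_zero ▸ node_strictMono.monotone n.zero_le

theorem node_lt_one (n : ℕ) : node n < 1 := by
  unfold node
  have : 0 < √((n : ℝ) + 1) := Real.sqrt_pos.2 (by positivity)
  have : 0 < 1 / √((n : ℝ) + 1) := by positivity
  linarith

theorem gapRadius_pos (n : ℕ) : 0 < gapRadius n := by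
  unfold gapRadius
  linarith [node_strictMono n.lt_succ_self]

theorem gapCenter_sub_gapRadius (n : ℕ) : gapCenter n - gapRadius n = node n + gapRadius n := by
  unfold gapCenter gapRadius
  ring

theorem ball_gap_subset (n : ℕ) :
    ball (gapCenter n) (gapRadius n) ⊆ Ioo (node n) (node (n + 1)) := by
  rw [Real.ball_eq_Ioo]
  apply Ioo_subset_Ioo <;> unfold gapCenter gapRadius <;> linarith [node_strictMono n.lt_succ_self]

end FatCantor

open FatCantor in
noncomputable def fatCantor : Set ℝ := Icc 0 1 \ ⋃ n, ball (gapCenter n) (gapRadius n)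

namespace FatCantor

theorem isCompact_fatCantor : IsCompact fatCantor :=
  isCompact_Icc.of_isClosed_subset
    (isClosed_Icc.sdiff (isOpen_iUnion fun _ => isOpen_ball)) sdiff_subset

theorem gapCenter_sub_gapRadius_mem (n : ℕ) : gapCenter n - gapRadius n ∈ fatCantor := by
  have hr := gapRadius_pos n
  have hlt : gapCenter n - gapRadius n < node (n + 1) := by
    rw [gapCenter_sub_gapRadius]; unfold gapRadius; linarith [node_strictMono n.lt_succ_self]
  refine ⟨⟨by linarith [gapCenter_sub_gapRadius n, node_nonneg n], by
    linarith [node_lt_one (n + 1)]⟩, ?_⟩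
  simp only [mem_iUnion, not_exists]
  intro m hm
  rcases lt_trichotomy m n with hmn | rfl | hmn
  · have := (ball_gap_subset m hm).2
    linarith [node_strictMono.monotone (Nat.succ_le_of_lt hmn), gapCenter_sub_gapRadius n]
  · simp [abs_of_pos hr] at hm
  · have := (ball_gap_subset m hm).1
    linarith [node_strictMono.monotone (Nat.succ_le_of_lt hmn)]

theorem fatCantor_nonempty : fatCantor.Nonempty := ⟨_, gapCenter_sub_gapRadius_mem 0⟩

theorem gapRadius_le_infDist (n : ℕ) : gapRadius n ≤ infDist (gapCenter n) fatCantor :=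
  (le_infDist fatCantor_nonempty).2 fun t ht => by
    have : t ∉ ball (gapCenter n) (gapRadius n) := fun h => ht.2 (mem_iUnion.2 ⟨n, h⟩)
    rwa [mem_ball, not_lt, dist_comm] at this

theorem volume_iUnion_gap_le :
    volume (⋃ n, ball (gapCenter n) (gapRadius n)) ≤ ENNReal.ofReal (1 / 2) := by
  refine (measure_iUnion_le _).trans (ENNReal.tsum_le_of_sum_range_le fun N => ?_)
  simp_rw [Real.volume_ball]
  rw [← ENNReal.ofReal_sum_of_nonneg fun n _ => by linarith [gapRadius_pos n]]
  apply ENNReal.ofReal_le_ofReal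
  have htele : ∑ n ∈ Finset.range N, 2 * gapRadius n = node N / 2 :=
    calc ∑ n ∈ Finset.range N, 2 * gapRadius n
        = (∑ n ∈ Finset.range N, (node (n + 1) - node n)) / 2 := by
          rw [Finset.sum_div]
          exact Finset.sum_congr rfl fun n _ => by unfold gapRadius; ring
      _ = node N / 2 := by rw [Finset.sum_range_sub, node_zero, sub_zero]
  linarith [node_lt_one N]

theorem volume_fatCantor_pos : 0 < volume fatCantor := by
  refine lt_of_lt_of_le ?_ le_measure_sdiff
  rw [Real.volume_Icc, sub_zero]
  calc (0 : ENNReal) < ENNReal.ofReal 1 - ENNReal.ofReal (1 / 2) :=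
        tsub_pos_of_lt ((ENNReal.ofReal_lt_ofReal_iff one_pos).2 (by norm_num))
    _ ≤ _ := tsub_le_tsub_left volume_iUnion_gap_le _

theorem one_div_four_mul_le_gapRadius_rpow (n : ℕ) :
    1 / (4 * ((n : ℝ) + 2)) ≤ gapRadius n ^ ((2 : ℝ) / 3) := by
  set t := √((n : ℝ) + 2)
  have ht : 0 < t := Real.sqrt_pos.2 (by positivity)
  have htsq : t ^ 2 = (n : ℝ) + 2 := Real.sq_sqrt (by positivity)
  have hdiff : 1 / (2 * t ^ 3) ≤ 1 / √((n : ℝ) + 1) - 1 / t := by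
    refine one_div_two_mul_pow_three_le_one_div_sub_one_div (Real.sqrt_pos.2 (by positivity))
      (Real.sqrt_le_sqrt (by linarith)) ?_
    rw [htsq, Real.sq_sqrt (by positivity)]
    ring
  have hcube : (1 / (2 * t)) ^ 3 ≤ gapRadius n := by
    have : gapRadius n = (1 / √((n : ℝ) + 1) - 1 / t) / 4 := by
      simp only [gapRadius, node, t]; push_cast; ring_nf
    rw [this]
    calc (1 / (2 * t)) ^ 3 = 1 / (2 * t ^ 3) / 4 := by field_simp; ring
      _ ≤ _ := by gcongr
  calc 1 / (4 * ((n : ℝ) + 2)) = (1 / (2 * t)) ^ 2 := by rw [← htsq]; field_simp; ring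
    _ ≤ _ := Real.sq_le_rpow_two_div_three (by positivity) hcube

theorem not_locallyBoundedVariationOn_mul_infDist_rpow {c : ℝ} (hc : 0 < c) :
    ¬ LocallyBoundedVariationOn (fun x => c * infDist x fatCantor ^ ((2 : ℝ) / 3)) univ := by
  intro hBV
  have hcenter (n : ℕ) := ball_gap_subset n (mem_ball_self (gapRadius_pos n))
  have hsum := summable_dist_of_eVariationOn_ne_top (hBV 0 1 trivial trivial)
    (a := fun n => gapCenter n - gapRadius n) (b := gapCenter)
    (fun n => by linarith [gapRadius_pos n])
    (fun n => by
      linarith [gapCenter_sub_gapRadius (n + 1), gapRadius_pos (n + 1), (hcenter n).2])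
    (fun n => ⟨trivial, sdiff_subset (gapCenter_sub_gapRadius_mem n)⟩)
    (fun n => ⟨trivial, by linarith [node_nonneg n, (hcenter n).1],
      by linarith [node_lt_one (n + 1), (hcenter n).2]⟩)
  have hharmonic : ¬ Summable fun n : ℕ => 1 / ((n : ℝ) + 2) := fun h =>
    Real.not_summable_one_div_natCast ((summable_nat_add_iff 2).1 (by simpa using h))
  refine hharmonic ((hsum.mul_left (4 / c)).of_nonneg_of_le (fun n => by positivity) fun n => ?_)
  simp only [infDist_zero_of_mem (gapCenter_sub_gapRadius_mem n),
    Real.zero_rpow (by norm_num : (2 : ℝ) / 3 ≠ 0), mul_zero, Real.dist_eq, sub_zero]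
  calc 1 / ((n : ℝ) + 2) = 4 / c * (c * (1 / (4 * ((n : ℝ) + 2)))) := by field_simp
    _ ≤ 4 / c * (c * gapRadius n ^ ((2 : ℝ) / 3)) := by
        gcongr; exact one_div_four_mul_le_gapRadius_rpow n
    _ ≤ 4 / c * |c * infDist (gapCenter n) fatCantor ^ ((2 : ℝ) / 3)| := by
        rw [abs_of_nonneg (mul_nonneg hc.le (Real.rpow_nonneg infDist_nonneg _))]
        gcongr
        exacts [(gapRadius_pos n).le, gapRadius_le_infDist n]

end FatCantor

/-- There is a compact set `K ⊆ [0,1]` of positive Lebesgue measure (a fat Cantor set)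
such that for every `μ > 0` the function `f(x) = ⨅_{t ∈ K} μ^{-1/3} ((x-t)²)^{1/3}` is
nonnegative, `2/3`-Hölder with constant `μ^{-1/3}`, its upper graph is the set
`W_μ = {(x,y) : ∃ t ∈ K, (x-t)² ≤ μ y³}`, and `f` fails to have locally bounded
variation. -/
theorem exists_fatCantor_nonBV_inf_function :
    ∃ K : Set ℝ, IsCompact K ∧ K ⊆ Icc 0 1 ∧ 0 < volume K ∧
      ∀ μ : ℝ, 0 < μ → ∀ f : ℝ → ℝ,
        (∀ x : ℝ, f x = ⨅ t : K, μ ^ (-(1 : ℝ) / 3) * ((x - (t : ℝ)) ^ 2) ^ ((1 : ℝ) / 3)) →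
        (∀ x : ℝ, 0 ≤ f x) ∧
        (∀ x y : ℝ, |f x - f y| ≤ μ ^ (-(1 : ℝ) / 3) * |x - y| ^ ((2 : ℝ) / 3)) ∧
        ({p : ℝ × ℝ | ∃ t ∈ K, (p.1 - t) ^ 2 ≤ μ * p.2 ^ 3} =
          {p : ℝ × ℝ | f p.1 ≤ p.2}) ∧
        ¬ LocallyBoundedVariationOn f univ := by
  have hK := FatCantor.isCompact_fatCantor
  have hne := FatCantor.fatCantor_nonempty
  refine ⟨fatCantor, hK, sdiff_subset, FatCantor.volume_fatCantor_pos, fun μ hμ f hf => ?_⟩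
  have hc : 0 < μ ^ (-(1 : ℝ) / 3) := Real.rpow_pos_of_pos hμ _
  obtain rfl : f = fun x => μ ^ (-(1 : ℝ) / 3) * infDist x fatCantor ^ ((2 : ℝ) / 3) :=
    funext fun x => (hf x).trans (iInf_mul_sq_sub_rpow_eq hK.isClosed hne hc.le x)
  exact ⟨fun x => mul_nonneg hc.le (Real.rpow_nonneg infDist_nonneg _),
    abs_mul_infDist_rpow_sub_le fatCantor hc.le (by norm_num) (by norm_num),
    setOf_exists_sq_sub_le_eq hK.isClosed hne hμ,
    FatCantor.not_locallyBoundedVariationOn_mul_infDist_rpow hc⟩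
end
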